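/- arXiv:2002.03613 — 7 statements merged into one kernel-verified Lean document; each statement's English description precedes it below -/
import Mathlib

section
/- Let n and f be natural numbers, let P be a finite type of cardinality n, and let F be a finite subset of P of cardinality at most f. If Q₁ and Q₂ are finite subsets of P each of cardinality at least ⌊(n+f)/2⌋ + 1, then the set (Q₁ ∩ Q₂) \ F is nonempty; that is, any two quorums have a common correct member. -/
/-!
With `q = ⌊(n+f)/2⌋ + 1` we have `2q > n + f`, so two quorums, both living in a universe of
`n` processes, overlap in more than `f` processes; at most `f` of these can be faulty.
-/

open Finset

namespace Finset

theorem lt_card_inter_of_card_add_lt_card_add_card {α : Type*} [Fintype α] [DecidableEq α]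
    {s t : Finset α} {k : ℕ}
    (h : Fintype.card α + k < #s + #t) : k < #(s ∩ t) := by
  have hunion : #(s ∪ t) ≤ Fintype.card α := card_le_univ _
  have hsum := card_union_add_card_inter s t
  omega

end Finset

/-- Any two quorums have a common correct (non-faulty) member. -/
theorem quorums_common_correct_member (n f : ℕ) (P : Type*) [Fintype P] [DecidableEq P]
    (hP : Fintype.card P = n) (F : Finset P) (hF : F.card ≤ f)
    (Q₁ Q₂ : Finset P)
    (hQ₁ : (n + f) / 2 + 1 ≤ Q₁.card) (hQ₂ : (n + f) / 2 + 1 ≤ Q₂.card) :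
    ((Q₁ ∩ Q₂) \ F).Nonempty := by
  have hquorums : Fintype.card P + f < #Q₁ + #Q₂ := by omega
  exact sdiff_nonempty_of_card_lt_card
    (hF.trans_lt (lt_card_inter_of_card_add_lt_card_add_card hquorums))
end

section
/- Let n and f be natural numbers with f ≤ n, let P be a finite type of cardinality n, and let F be a finite subset of P of cardinality at most f. If Q is a finite subset of P of cardinality at least ⌊(n+f)/2⌋ + 1, then the cardinality of Q \ F is at least ⌊(n−f)/2⌋ + 1. -/
theorem quorum_correct_members_sharp_general (n f : ℕ) (hfn : f ≤ n)
    (P : Type*) [DecidableEq P]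
    (F : Finset P) (hF : F.card ≤ f)
    (Q : Finset P) (hQ : (n + f) / 2 + 1 ≤ Q.card) :
    (n - f) / 2 + 1 ≤ (Q \ F).card := by
  have hhalf : (n + f) / 2 = (n - f) / 2 + f := by omega
  have hsdiff : Q.card - F.card ≤ (Q \ F).card := Finset.le_card_sdiff F Q
  omega

/-- Any quorum contains at least ⌊(n−f)/2⌋ + 1 correct processes. -/
theorem quorum_correct_members_sharp (n f : ℕ) (hfn : f ≤ n)
    (P : Type*) [Fintype P] [DecidableEq P] (hP : Fintype.card P = n)
    (F : Finset P) (hF : F.card ≤ f)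
    (Q : Finset P) (hQ : (n + f) / 2 + 1 ≤ Q.card) :
    (n - f) / 2 + 1 ≤ (Q \ F).card :=
  quorum_correct_members_sharp_general n f hfn P F hF Q hQ
end

section
/- Let n and f be natural numbers, let P be a finite type of cardinality n, let V be a type of values, and let F be a finite subset of P of cardinality at most f. Let vote : P → V → Prop be such that every correct process votes for at most one value, i.e., for all p ∉ F and all values w, w', vote p w and vote p w' imply w = w'. If there exist finite subsets Q and Q' of P, each of cardinality at least ⌊(n+f)/2⌋ + 1, and values v and v' such that vote p v holds for all p ∈ Q and vote p v' holds for all p ∈ Q', then v = v'. -/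
/-!
Two quorums of size `⌊(n+f)/2⌋ + 1` among `n` processes overlap in at least `f + 1` processes,
so their intersection contains a correct process; that process voted for both values, and a
correct process votes for at most one value.
-/

namespace Finset

variable {α : Type*} [DecidableEq α]

theorem lt_card_inter_of_add_lt_card_add_card {s t : Finset α} {m : ℕ}
    (h : (s ∪ t).card + m < s.card + t.card) : m < (s ∩ t).card := by
  have := card_union_add_card_inter s t
  omega

theorem lt_card_inter_of_quorum [Fintype α] {n f : ℕ} (hα : Fintype.card α = n)
    {s t : Finset α} (hs : (n + f) / 2 + 1 ≤ s.card) (ht : (n + f) / 2 + 1 ≤ t.card) :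
    f < (s ∩ t).card := by
  have hunion : (s ∪ t).card ≤ n := hα ▸ card_le_univ _
  exact lt_card_inter_of_add_lt_card_add_card (by omega)

end Finset

theorem no_two_quorum_values_general (n f : ℕ) (P : Type*) [Fintype P]
    (hP : Fintype.card P = n) (V : Type*)
    (F : Finset P) (hF : F.card ≤ f)
    (vote : P → V → Prop)
    (hvote : ∀ p ∉ F, ∀ w w' : V, vote p w → vote p w' → w = w')
    (Q Q' : Finset P)
    (hQ : (n + f) / 2 + 1 ≤ Q.card) (hQ' : (n + f) / 2 + 1 ≤ Q'.card)
    (v v' : V)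
    (hv : ∀ p ∈ Q, vote p v) (hv' : ∀ p ∈ Q', vote p v') :
    v = v' := by
  classical
  have hoverlap : F.card < (Q ∩ Q').card := hF.trans_lt (Finset.lt_card_inter_of_quorum hP hQ hQ')
  obtain ⟨p, hpQQ', hpF⟩ := Finset.exists_mem_notMem_of_card_lt_card hoverlap
  rw [Finset.mem_inter] at hpQQ'
  exact hvote p hpF v v' (hv p hpQQ'.1) (hv' p hpQQ'.2)

/-- Abstract Lemma 1: if correct processes vote for at most one value, then no
two distinct values can each gather a quorum of votes. -/
theorem no_two_quorum_values (n f : ℕ) (P : Type*) [Fintype P] [DecidableEq P]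
    (hP : Fintype.card P = n) (V : Type*)
    (F : Finset P) (hF : F.card ≤ f)
    (vote : P → V → Prop)
    (hvote : ∀ p ∉ F, ∀ w w' : V, vote p w → vote p w' → w = w')
    (Q Q' : Finset P)
    (hQ : (n + f) / 2 + 1 ≤ Q.card) (hQ' : (n + f) / 2 + 1 ≤ Q'.card)
    (v v' : V)
    (hv : ∀ p ∈ Q, vote p v) (hv' : ∀ p ∈ Q', vote p v') :
    v = v' :=
  no_two_quorum_values_general n f P hP V F hF vote hvote Q Q' hQ hQ' v v' hv hv'
end

section
/- Let n and f be natural numbers with f ≤ n, let P be a finite type of cardinality n, let V be a type of values, and let F be a finite subset of P of cardinality at most f. Let prepare : P → V → Prop satisfy: for all p ∉ F and all values w, w', prepare p w and prepare p w' imply w = w'. Let commit : P → V → Prop satisfy: for all p ∉ F and all values w, if commit p w then there exists a finite subset Q of P of cardinality at least ⌊(n+f)/2⌋ + 1 with prepare s w for all s ∈ Q. If there exist finite subsets Q₁ and Q₂ of P, each of cardinality at least ⌊(n+f)/2⌋ + 1, and values v and v' such that commit p v holds for all p ∈ Q₁ and commit p v' holds for all p ∈ Q₂, then v = v'. -/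
/-! Two quorums of size `⌊(n+f)/2⌋ + 1` overlap in at least `f + 1` processes, so they share a
correct one. A correct process in both commit quorums committed `v` and `v'`, so each is backed
by a quorum of prepares; those two prepare quorums share a correct process, which prepared both
`v` and `v'`, hence `v = v'`. -/

theorem Finset.exists_mem_inter_notMem_of_card_add_lt {α : Type*} [Fintype α]
    {F Q₁ Q₂ : Finset α} (h : Fintype.card α + F.card < Q₁.card + Q₂.card) :
    ∃ p ∈ Q₁, p ∈ Q₂ ∧ p ∉ F := by
  classical
  have hunion := card_union_add_card_inter Q₁ Q₂
  have huniv : (Q₁ ∪ Q₂).card ≤ Fintype.card α := card_le_univ _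
  obtain ⟨p, hp, hpF⟩ := exists_mem_notMem_of_card_lt_card (s := F) (t := Q₁ ∩ Q₂) (by omega)
  exact ⟨p, (mem_inter.mp hp).1, (mem_inter.mp hp).2, hpF⟩

section Quorum

variable {n f : ℕ} {P : Type*} [Fintype P] {F : Finset P}

theorem exists_correct_mem_of_quorums (hP : Fintype.card P = n) (hF : F.card ≤ f)
    {Q₁ Q₂ : Finset P} (hQ₁ : (n + f) / 2 + 1 ≤ Q₁.card) (hQ₂ : (n + f) / 2 + 1 ≤ Q₂.card) :
    ∃ p ∈ Q₁, p ∈ Q₂ ∧ p ∉ F :=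
  Finset.exists_mem_inter_notMem_of_card_add_lt (by omega)

theorem eq_of_prepare_quorums {V : Type*} {prepare : P → V → Prop}
    (hP : Fintype.card P = n) (hF : F.card ≤ f)
    (hprep : ∀ p ∉ F, ∀ w w' : V, prepare p w → prepare p w' → w = w')
    {R₁ R₂ : Finset P} (hR₁ : (n + f) / 2 + 1 ≤ R₁.card) (hR₂ : (n + f) / 2 + 1 ≤ R₂.card)
    {w w' : V} (hw : ∀ s ∈ R₁, prepare s w) (hw' : ∀ s ∈ R₂, prepare s w') :
    w = w' := by
  obtain ⟨q, hq₁, hq₂, hqF⟩ := exists_correct_mem_of_quorums hP hF hR₁ hR₂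
  exact hprep q hqF w w' (hw q hq₁) (hw' q hq₂)

end Quorum

theorem same_round_agreement_general (n f : ℕ)
    (P : Type*) [Fintype P] (hP : Fintype.card P = n)
    (V : Type*) (F : Finset P) (hF : F.card ≤ f)
    (prepare : P → V → Prop)
    (hprep : ∀ p ∉ F, ∀ w w' : V, prepare p w → prepare p w' → w = w')
    (commit : P → V → Prop)
    (hcommit : ∀ p ∉ F, ∀ w : V, commit p w →
      ∃ Q : Finset P, (n + f) / 2 + 1 ≤ Q.card ∧ ∀ s ∈ Q, prepare s w)
    (Q₁ Q₂ : Finset P)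
    (hQ₁ : (n + f) / 2 + 1 ≤ Q₁.card) (hQ₂ : (n + f) / 2 + 1 ≤ Q₂.card)
    (v v' : V)
    (hv : ∀ p ∈ Q₁, commit p v) (hv' : ∀ p ∈ Q₂, commit p v') :
    v = v' := by
  obtain ⟨p, hp₁, hp₂, hpF⟩ := exists_correct_mem_of_quorums hP hF hQ₁ hQ₂
  obtain ⟨R₁, hR₁, hprep₁⟩ := hcommit p hpF v (hv p hp₁)
  obtain ⟨R₂, hR₂, hprep₂⟩ := hcommit p hpF v' (hv' p hp₂)
  exact eq_of_prepare_quorums hP hF hprep hR₁ hR₂ hprep₁ hprep₂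

/-- Same-round agreement: if correct processes prepare at most one value and only
commit values backed by a quorum of prepares, then no two distinct values can
each gather a quorum of commits. -/
theorem same_round_agreement (n f : ℕ) (hfn : f ≤ n)
    (P : Type*) [Fintype P] [DecidableEq P] (hP : Fintype.card P = n)
    (V : Type*) (F : Finset P) (hF : F.card ≤ f)
    (prepare : P → V → Prop)
    (hprep : ∀ p ∉ F, ∀ w w' : V, prepare p w → prepare p w' → w = w')
    (commit : P → V → Prop)
    (hcommit : ∀ p ∉ F, ∀ w : V, commit p w →
      ∃ Q : Finset P, (n + f) / 2 + 1 ≤ Q.card ∧ ∀ s ∈ Q, prepare s w)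
    (Q₁ Q₂ : Finset P)
    (hQ₁ : (n + f) / 2 + 1 ≤ Q₁.card) (hQ₂ : (n + f) / 2 + 1 ≤ Q₂.card)
    (v v' : V)
    (hv : ∀ p ∈ Q₁, commit p v) (hv' : ∀ p ∈ Q₂, commit p v') :
    v = v' :=
  same_round_agreement_general n f P hP V F hF prepare hprep commit hcommit Q₁ Q₂ hQ₁ hQ₂ v v' hv
    hv'
end

section
/- Let n, f, and r be natural numbers with f ≤ n, let P be a finite type of cardinality n, and let F be a finite subset of P of cardinality at most f. Let report : P → Option ℕ and let S be a finite subset of P with S ∩ F = ∅ and cardinality at least ⌊(n−f)/2⌋ + 1, such that report p = some r for all p ∈ S. Assume validity: for all p ∈ P and all ρ, report p = some ρ implies ρ ≤ r. Then for every finite subset Q of P of cardinality at least ⌊(n+f)/2⌋ + 1, there exists p ∈ Q with report p = some r, and every ρ with report p' = some ρ for some p' ∈ Q satisfies ρ ≤ r; that is, the highest round reported within any quorum is exactly r. -/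
theorem Finset.inter_nonempty_of_quorum {P : Type*} [Fintype P] [DecidableEq P] {n f : ℕ}
    (hP : Fintype.card P = n) {Q S : Finset P} (hQ : (n + f) / 2 + 1 ≤ Q.card)
    (hS : (n - f) / 2 + 1 ≤ S.card) : (Q ∩ S).Nonempty := by
  refine inter_nonempty_of_card_lt_card_add_card (subset_univ Q) (subset_univ S) ?_
  rw [card_univ, hP]
  omega

theorem highest_prepared_round_general (n f r : ℕ)
    (P : Type*) [Fintype P] [DecidableEq P] (hP : Fintype.card P = n)
    (report : P → Option ℕ)
    (S : Finset P) (hS : (n - f) / 2 + 1 ≤ S.card)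
    (hSr : ∀ p ∈ S, report p = some r)
    (hvalid : ∀ (p : P) (ρ : ℕ), report p = some ρ → ρ ≤ r) :
    ∀ Q : Finset P, (n + f) / 2 + 1 ≤ Q.card →
      (∃ p ∈ Q, report p = some r) ∧
      ∀ p' ∈ Q, ∀ ρ : ℕ, report p' = some ρ → ρ ≤ r := by
  intro Q hQ
  obtain ⟨p, hp⟩ := Finset.inter_nonempty_of_quorum hP hQ hS
  obtain ⟨hpQ, hpS⟩ := Finset.mem_inter.mp hp
  exact ⟨⟨p, hpQ, hSr p hpS⟩, fun p' _ ρ h => hvalid p' ρ h⟩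

/-- The highest prepared round reported within any quorum of ROUND-CHANGE
messages is exactly r. -/
theorem highest_prepared_round (n f r : ℕ) (hfn : f ≤ n)
    (P : Type*) [Fintype P] [DecidableEq P] (hP : Fintype.card P = n)
    (F : Finset P) (hF : F.card ≤ f)
    (report : P → Option ℕ)
    (S : Finset P) (hSF : S ∩ F = ∅) (hS : (n - f) / 2 + 1 ≤ S.card)
    (hSr : ∀ p ∈ S, report p = some r)
    (hvalid : ∀ (p : P) (ρ : ℕ), report p = some ρ → ρ ≤ r) :
    ∀ Q : Finset P, (n + f) / 2 + 1 ≤ Q.card →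
      (∃ p ∈ Q, report p = some r) ∧
      ∀ p' ∈ Q, ∀ ρ : ℕ, report p' = some ρ → ρ ≤ r :=
  highest_prepared_round_general n f r P hP report S hS hSr hvalid
end

section
/- Let n, f, and r be natural numbers with f ≤ n, let P be a finite type of cardinality n, let V be a type of values, and let F be a finite subset of P of cardinality at most f. Let prepare : P → V → Prop satisfy: for all p ∉ F and all values w, w', prepare p w and prepare p w' imply w = w'. Let S be a finite subset of P with S ∩ F = ∅ and cardinality at least ⌊(n−f)/2⌋ + 1 such that prepare p v holds for all p ∈ S, and let rcReport : P → Option (ℕ × V) satisfy rcReport p = some (r, v) for all p ∈ S and, for all p, pr, pv, rcReport p = some (pr, pv) implies pr ≤ r. Then: (i) there is no finite subset Q of P of cardinality at least ⌊(n+f)/2⌋ + 1 with rcReport p = none for all p ∈ Q; and (ii) for every value w, if there exist a finite subset Q_rc of P of cardinality at least ⌊(n+f)/2⌋ + 1, a process p ∈ Q_rc, and a natural number pr with rcReport p = some (pr, w), such that pr' ≤ pr whenever rcReport p' = some (pr', pv') for some p' ∈ Q_rc, and there exists a finite subset Q_p of P of cardinality at least ⌊(n+f)/2⌋ + 1 with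 prepare s w for all s ∈ Q_p, then w = v. -/
/-!
Since ⌊(n+f)/2⌋ + 1 + ⌊(n−f)/2⌋ + 1 > n, every quorum meets S. A process of S reports the
prepared pair (r, v), so no quorum reports "not prepared" (J1 fails), and a quorum that
prepared w contains a correct process of S, which prepared both w and v, so w = v (J2).
-/

open Finset

theorem quorum_inter_nonempty {P : Type*} [Fintype P] [DecidableEq P] {n f : ℕ}
    (hP : Fintype.card P = n) {Q S : Finset P}
    (hQ : (n + f) / 2 + 1 ≤ #Q) (hS : (n - f) / 2 + 1 ≤ #S) : (Q ∩ S).Nonempty :=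
  inter_nonempty_of_card_lt_card_add_card (subset_univ Q) (subset_univ S)
    (by rw [card_univ, hP]; omega)

theorem eq_of_prepare_quorum {P V : Type*} [Fintype P] [DecidableEq P] {n f : ℕ}
    (hP : Fintype.card P = n) {F S Q : Finset P} {prepare : P → V → Prop} {v w : V}
    (hprep : ∀ p ∉ F, ∀ w w' : V, prepare p w → prepare p w' → w = w')
    (hSF : S ∩ F = ∅) (hS : (n - f) / 2 + 1 ≤ #S) (hSprep : ∀ p ∈ S, prepare p v)
    (hQ : (n + f) / 2 + 1 ≤ #Q) (hQprep : ∀ s ∈ Q, prepare s w) : w = v := by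
  obtain ⟨q, hq⟩ := quorum_inter_nonempty hP hQ hS
  rw [mem_inter] at hq
  have hqF : q ∉ F := disjoint_left.mp (disjoint_iff_inter_eq_empty.mpr hSF) hq.2
  exact hprep q hqF w v (hQprep q hq.1) (hSprep q hq.2)

theorem preprepare_justification_base_general (n f r : ℕ)
    (P : Type*) [Fintype P] [DecidableEq P] (hP : Fintype.card P = n)
    (V : Type*) (F : Finset P)
    (prepare : P → V → Prop)
    (hprep : ∀ p ∉ F, ∀ w w' : V, prepare p w → prepare p w' → w = w')
    (v : V)
    (S : Finset P) (hSF : S ∩ F = ∅) (hS : (n - f) / 2 + 1 ≤ S.card)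
    (hSprep : ∀ p ∈ S, prepare p v)
    (rcReport : P → Option (ℕ × V))
    (hSrc : ∀ p ∈ S, rcReport p = some (r, v)) :
    (¬ ∃ Q : Finset P, (n + f) / 2 + 1 ≤ Q.card ∧ ∀ p ∈ Q, rcReport p = none) ∧
    ∀ w : V,
      (∃ Qrc : Finset P, (n + f) / 2 + 1 ≤ Qrc.card ∧
        ∃ p ∈ Qrc, ∃ pr : ℕ, rcReport p = some (pr, w) ∧
          (∀ p' ∈ Qrc, ∀ (pr' : ℕ) (pv' : V),
            rcReport p' = some (pr', pv') → pr' ≤ pr) ∧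
          ∃ Qp : Finset P, (n + f) / 2 + 1 ≤ Qp.card ∧ ∀ s ∈ Qp, prepare s w) →
      w = v := by
  refine ⟨?_, ?_⟩
  · rintro ⟨Q, hQ, hnone⟩
    obtain ⟨p, hp⟩ := quorum_inter_nonempty hP hQ hS
    rw [mem_inter] at hp
    simpa [hnone p hp.1] using hSrc p hp.2
  · rintro w ⟨-, -, -, -, -, -, -, Qp, hQp, hQpprep⟩
    exact eq_of_prepare_quorum hP hprep hSF hS hSprep hQp hQpprep

/-- Base case of Lemma 2, abstract form: once at least ⌊(n−f)/2⌋ + 1 correct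
processes have prepared v at round r, the justification conditions J1 and J2 of
a PRE-PREPARE for round r + 1 can only hold for value v. -/
theorem preprepare_justification_base (n f r : ℕ) (hfn : f ≤ n)
    (P : Type*) [Fintype P] [DecidableEq P] (hP : Fintype.card P = n)
    (V : Type*) (F : Finset P) (hF : F.card ≤ f)
    (prepare : P → V → Prop)
    (hprep : ∀ p ∉ F, ∀ w w' : V, prepare p w → prepare p w' → w = w')
    (v : V)
    (S : Finset P) (hSF : S ∩ F = ∅) (hS : (n - f) / 2 + 1 ≤ S.card)
    (hSprep : ∀ p ∈ S, prepare p v)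
    (rcReport : P → Option (ℕ × V))
    (hSrc : ∀ p ∈ S, rcReport p = some (r, v))
    (hvalid : ∀ (p : P) (pr : ℕ) (pv : V), rcReport p = some (pr, pv) → pr ≤ r) :
    (¬ ∃ Q : Finset P, (n + f) / 2 + 1 ≤ Q.card ∧ ∀ p ∈ Q, rcReport p = none) ∧
    ∀ w : V,
      (∃ Qrc : Finset P, (n + f) / 2 + 1 ≤ Qrc.card ∧
        ∃ p ∈ Qrc, ∃ pr : ℕ, rcReport p = some (pr, w) ∧
          (∀ p' ∈ Qrc, ∀ (pr' : ℕ) (pv' : V),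
            rcReport p' = some (pr', pv') → pr' ≤ pr) ∧
          ∃ Qp : Finset P, (n + f) / 2 + 1 ≤ Qp.card ∧ ∀ s ∈ Qp, prepare s w) →
      w = v :=
  preprepare_justification_base_general n f r P hP V F prepare hprep v S hSF hS hSprep rcReport hSrc
end

section
/- Let n, f, and r be natural numbers with f ≤ n, let P be a finite type of cardinality n, let V be a type of values, and let F be a finite subset of P of cardinality at most f. Let prepare : ℕ → P → V → Prop satisfy: for every round ρ, every p ∉ F, and all values w, w', prepare ρ p w and prepare ρ p w' imply w = w'. Let commit : ℕ → P → V → Prop satisfy: for every round ρ, every p ∉ F, and every value w, if commit ρ p w then there exists a finite subset Q of P of cardinality at least ⌊(n+f)/2⌋ + 1 with prepare ρ s w for all s ∈ Q. Assume the justification-chain property: for every round ρ > r, every p ∉ F, and every value w, if prepare ρ p w then there exist a round ρ' with r ≤ ρ' < ρ and a finite subset Q of P of cardinality at least ⌊(n+f)/2⌋ + 1 with prepare ρ' s w for all s ∈ Q. Suppose there exists a finite subset Q₀ of P of cardinality at least ⌊(n+f)/2⌋ + 1 with commit r p v for all p ∈ Q₀. Then for every round ρ ≥ r and every value w, if there exists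 a finite subset Q of P of cardinality at least ⌊(n+f)/2⌋ + 1 with commit ρ p w for all p ∈ Q, then w = v. -/
/-!
Call a value `w` *locked* at round `ρ` when a quorum of processes prepared `w` at `ρ`.
A commit quorum for `w` at `ρ` contains a correct process, which committed only after seeing
`w` locked at `ρ`. Two quorums overlap in a correct process, and a correct process prepares at
most one value per round, so `v` is the only value locked at round `r`. A value locked at a
later round has, through a correct member of the quorum, a justifying quorum at an earlier
round `≥ r`; by strong induction on the round, every value locked at a round `≥ r` is `v`.
-/

open Finset

section Quorums

variable {P : Type*} {F : Finset P} {q : ℕ}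

def HasQuorum (q : ℕ) (M : P → Prop) : Prop :=
  ∃ Q : Finset P, q ≤ #Q ∧ ∀ p ∈ Q, M p

theorem HasQuorum.exists_not_mem {M : P → Prop} (hM : HasQuorum q M) (hq : #F < q) :
    ∃ p ∉ F, M p := by
  obtain ⟨Q, hQ, hQM⟩ := hM
  obtain ⟨p, hpQ, hpF⟩ := exists_mem_notMem_of_card_lt_card (hq.trans_le hQ)
  exact ⟨p, hpF, hQM p hpQ⟩

theorem HasQuorum.exists_not_mem_of_inter [Fintype P] {M₁ M₂ : P → Prop}
    (h₁ : HasQuorum q M₁) (h₂ : HasQuorum q M₂) (hq : #F + Fintype.card P < 2 * q) :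
    ∃ p ∉ F, M₁ p ∧ M₂ p := by
  classical
  obtain ⟨Q₁, hQ₁, hQ₁M⟩ := h₁
  obtain ⟨Q₂, hQ₂, hQ₂M⟩ := h₂
  have hunion : #(Q₁ ∪ Q₂) ≤ Fintype.card P := card_le_univ _
  have hsum := card_union_add_card_inter Q₁ Q₂
  obtain ⟨p, hp, hpF⟩ := exists_mem_notMem_of_card_lt_card (s := F) (t := Q₁ ∩ Q₂) (by omega)
  rw [mem_inter] at hp
  exact ⟨p, hpF, hQ₁M p hp.1, hQ₂M p hp.2⟩

end Quorums

section Locking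

variable {P V : Type*} {F : Finset P} {q : ℕ} {prepare commit : ℕ → P → V → Prop}

theorem hasQuorum_prepare_of_commit
    (hcommit : ∀ ρ, ∀ p ∉ F, ∀ w, commit ρ p w → HasQuorum q (prepare ρ · w))
    (hq : #F < q) {ρ : ℕ} {w : V} (h : HasQuorum q (commit ρ · w)) :
    HasQuorum q (prepare ρ · w) := by
  obtain ⟨p, hpF, hp⟩ := h.exists_not_mem hq
  exact hcommit ρ p hpF w hp

theorem eq_of_hasQuorum_prepare_of_le [Fintype P] {r : ℕ} {v : V}
    (hprep : ∀ ρ, ∀ p ∉ F, ∀ w w', prepare ρ p w → prepare ρ p w' → w = w')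
    (hchain : ∀ ρ, r < ρ → ∀ p ∉ F, ∀ w, prepare ρ p w →
      ∃ ρ', r ≤ ρ' ∧ ρ' < ρ ∧ HasQuorum q (prepare ρ' · w))
    (hq : #F + Fintype.card P < 2 * q) (hv : HasQuorum q (prepare r · v)) :
    ∀ ρ, r ≤ ρ → ∀ w, HasQuorum q (prepare ρ · w) → w = v := by
  intro ρ
  induction ρ using Nat.strong_induction_on with
  | _ ρ ih =>
    intro hrρ w hw
    rcases hrρ.eq_or_lt with rfl | hlt
    · obtain ⟨p, hpF, hpw, hpv⟩ := hw.exists_not_mem_of_inter hv hq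
      exact hprep _ p hpF w v hpw hpv
    · have hF : #F < q := by have := card_le_univ F; omega
      obtain ⟨p, hpF, hp⟩ := hw.exists_not_mem hF
      obtain ⟨ρ', hrρ', hρ', hw'⟩ := hchain ρ hlt p hpF w hp
      exact ih ρ' hρ' hrρ' w hw'

end Locking

theorem agreement_general (n f r : ℕ)
    (P : Type*) [Fintype P] (hP : Fintype.card P = n)
    (V : Type*) (F : Finset P) (hF : F.card ≤ f)
    (prepare : ℕ → P → V → Prop)
    (hprep : ∀ (ρ : ℕ), ∀ p ∉ F, ∀ w w' : V,
      prepare ρ p w → prepare ρ p w' → w = w')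
    (commit : ℕ → P → V → Prop)
    (hcommit : ∀ (ρ : ℕ), ∀ p ∉ F, ∀ w : V, commit ρ p w →
      ∃ Q : Finset P, (n + f) / 2 + 1 ≤ Q.card ∧ ∀ s ∈ Q, prepare ρ s w)
    (hchain : ∀ ρ : ℕ, r < ρ → ∀ p ∉ F, ∀ w : V, prepare ρ p w →
      ∃ ρ' : ℕ, r ≤ ρ' ∧ ρ' < ρ ∧
        ∃ Q : Finset P, (n + f) / 2 + 1 ≤ Q.card ∧ ∀ s ∈ Q, prepare ρ' s w)
    (v : V)
    (Q₀ : Finset P) (hQ₀ : (n + f) / 2 + 1 ≤ Q₀.card)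
    (hQ₀v : ∀ p ∈ Q₀, commit r p v) :
    ∀ ρ : ℕ, r ≤ ρ → ∀ w : V,
      (∃ Q : Finset P, (n + f) / 2 + 1 ≤ Q.card ∧ ∀ p ∈ Q, commit ρ p w) →
      w = v := by
  -- Two quorums of size ⌊(n+f)/2⌋ + 1 share more than f processes.
  have hq : #F + Fintype.card P < 2 * ((n + f) / 2 + 1) := by omega
  have hF' : #F < (n + f) / 2 + 1 := by have := card_le_univ F; omega
  have hv := hasQuorum_prepare_of_commit hcommit hF' ⟨Q₀, hQ₀, hQ₀v⟩
  intro ρ hrρ w hw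
  exact eq_of_hasQuorum_prepare_of_le hprep hchain hq hv ρ hrρ w
    (hasQuorum_prepare_of_commit hcommit hF' hw)

/-- Abstract Theorem 1 (Agreement): if a decision on v is reached at round r,
then no quorum of COMMIT messages for a different value can occur at any round
ρ ≥ r. -/
theorem agreement (n f r : ℕ) (hfn : f ≤ n)
    (P : Type*) [Fintype P] [DecidableEq P] (hP : Fintype.card P = n)
    (V : Type*) (F : Finset P) (hF : F.card ≤ f)
    (prepare : ℕ → P → V → Prop)
    (hprep : ∀ (ρ : ℕ), ∀ p ∉ F, ∀ w w' : V,
      prepare ρ p w → prepare ρ p w' → w = w')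
    (commit : ℕ → P → V → Prop)
    (hcommit : ∀ (ρ : ℕ), ∀ p ∉ F, ∀ w : V, commit ρ p w →
      ∃ Q : Finset P, (n + f) / 2 + 1 ≤ Q.card ∧ ∀ s ∈ Q, prepare ρ s w)
    (hchain : ∀ ρ : ℕ, r < ρ → ∀ p ∉ F, ∀ w : V, prepare ρ p w →
      ∃ ρ' : ℕ, r ≤ ρ' ∧ ρ' < ρ ∧
        ∃ Q : Finset P, (n + f) / 2 + 1 ≤ Q.card ∧ ∀ s ∈ Q, prepare ρ' s w)
    (v : V)
    (Q₀ : Finset P) (hQ₀ : (n + f) / 2 + 1 ≤ Q₀.card)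
    (hQ₀v : ∀ p ∈ Q₀, commit r p v) :
    ∀ ρ : ℕ, r ≤ ρ → ∀ w : V,
      (∃ Q : Finset P, (n + f) / 2 + 1 ≤ Q.card ∧ ∀ p ∈ Q, commit ρ p w) →
      w = v :=
  agreement_general n f r P hP V F hF prepare hprep commit hcommit hchain v Q₀ hQ₀ hQ₀v
end
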